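/- Let n ≥ 3, let v₁, v₂, v₃, v₄ ∈ ℝ^{n+1} be pairwise orthogonal vectors with ‖vᵢ‖² = 1/2 for i = 1,2,3,4, let a, b ∈ ℝ satisfy a² + b² = 1, and define γ(s) = cos(√2 a s) v₁ + sin(√2 a s) v₂ + cos(√2 b s) v₃ + sin(√2 b s) v₄. For a smooth map X : ℝ → ℝ^{n+1}, set (D X)(s) = X'(s) − ⟨X'(s), γ(s)⟩ γ(s). Then γ satisfies D(D(D γ'))(s) + (D γ')(s) = 0 for all s ∈ ℝ; that is, γ is a biharmonic curve in the unit sphere Sⁿ. -/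

import Mathlib

/-! The curve is `x + y`, where `x`, `y` are circles of radius `1/√2` in orthogonal planes,
traversed with angular speeds `α`, `β` satisfying `α² + β² = 2`. Together with `x' / α` and
`y' / β` they form an orthogonal moving frame, and every field in the computation has constant
coefficients in it. On coefficient vectors `d/ds` acts by a rotation generator, and `D` by the
same generator corrected by a multiple of the coefficients `(1, 0, 1, 0)` of the curve itself, so
the biharmonic equation becomes a polynomial identity in `α`, `β` modulo `α² + β² = 2`. -/

open scoped RealInnerProductSpace

/-- The covariant derivative along a unit-sphere curve `γ` of a vector field `X` along `γ`:
the orthogonal projection `(D X)(s) = X'(s) − ⟨X'(s), γ(s)⟩ γ(s)` of the Euclidean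
derivative onto the tangent space of the sphere at `γ(s)`. -/
noncomputable def sphereCovD {m : ℕ} (γ X : ℝ → EuclideanSpace ℝ (Fin m)) :
    ℝ → EuclideanSpace ℝ (Fin m) := fun s =>
  deriv X s - ⟪deriv X s, γ s⟫ • γ s

open Real

section Module

variable {E : Type*} [AddCommGroup E] [Module ℝ E] (v : Fin 4 → E) (α β : ℝ)

noncomputable def planeCircle (ω : ℝ) (e₁ e₂ : E) (s : ℝ) : E :=
  cos (ω * s) • e₁ + sin (ω * s) • e₂

noncomputable def torusFrameField (p q r t s : ℝ) : E :=
  p • planeCircle α (v 0) (v 1) s + q • planeCircle α (v 1) (-v 0) s +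
    r • planeCircle β (v 2) (v 3) s + t • planeCircle β (v 3) (-v 2) s

theorem torusFrameField_add (p q r t p' q' r' t' s : ℝ) :
    torusFrameField v α β p q r t s + torusFrameField v α β p' q' r' t' s =
      torusFrameField v α β (p + p') (q + q') (r + r') (t + t') s := by
  simp only [torusFrameField]
  module

theorem torusFrameField_zero (s : ℝ) : torusFrameField v α β 0 0 0 0 s = 0 := by
  simp only [torusFrameField, zero_smul, add_zero]

end Module

section Deriv

variable {E : Type*} [NormedAddCommGroup E] [NormedSpace ℝ E]

theorem hasDerivAt_planeCircle (ω : ℝ) (e₁ e₂ : E) (s : ℝ) :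
    HasDerivAt (planeCircle ω e₁ e₂) (ω • planeCircle ω e₂ (-e₁) s) s := by
  have hlin : HasDerivAt (fun u => ω * u) ω s := by
    simpa using (hasDerivAt_id s).const_mul ω
  refine ((hlin.cos.smul_const e₁).add (hlin.sin.smul_const e₂)).congr_deriv ?_
  simp only [planeCircle]
  module

theorem hasDerivAt_torusFrameField (v : Fin 4 → E) (α β p q r t s : ℝ) :
    HasDerivAt (torusFrameField v α β p q r t)
      (torusFrameField v α β (-α * q) (α * p) (-β * t) (β * r) s) s := by
  refine (((((hasDerivAt_planeCircle α (v 0) (v 1) s).const_smul p).add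
    ((hasDerivAt_planeCircle α (v 1) (-v 0) s).const_smul q)).add
    ((hasDerivAt_planeCircle β (v 2) (v 3) s).const_smul r)).add
    ((hasDerivAt_planeCircle β (v 3) (-v 2) s).const_smul t)).congr_deriv ?_
  simp only [torusFrameField, planeCircle]
  module

end Deriv

theorem inner_torusFrameField {E : Type*} [NormedAddCommGroup E] [InnerProductSpace ℝ E]
    {v : Fin 4 → E} (α β : ℝ) (horth : ∀ i j : Fin 4, i ≠ j → ⟪v i, v j⟫ = 0)
    (hnorm : ∀ i : Fin 4, ‖v i‖ ^ 2 = 1 / 2) (p q r t p' q' r' t' s : ℝ) :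
    ⟪torusFrameField v α β p q r t s, torusFrameField v α β p' q' r' t' s⟫ =
      (p * p' + q * q' + r * r' + t * t') / 2 := by
  simp (disch := decide) only [torusFrameField, planeCircle, inner_add_left, inner_add_right,
    inner_neg_left, inner_neg_right, real_inner_smul_left, real_inner_smul_right,
    real_inner_self_eq_norm_sq, hnorm, horth]
  linear_combination (p * p' + q * q') / 2 * sin_sq_add_cos_sq (α * s) +
    (r * r' + t * t') / 2 * sin_sq_add_cos_sq (β * s)

section SphereCovD

variable {m : ℕ} {v : Fin 4 → EuclideanSpace ℝ (Fin m)} {α β : ℝ}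

theorem sphereCovD_torusFrameField (horth : ∀ i j : Fin 4, i ≠ j → ⟪v i, v j⟫ = 0)
    (hnorm : ∀ i : Fin 4, ‖v i‖ ^ 2 = 1 / 2) (p q r t : ℝ) :
    sphereCovD (torusFrameField v α β 1 0 1 0) (torusFrameField v α β p q r t) =
      torusFrameField v α β (-α * q + (α * q + β * t) / 2) (α * p)
        (-β * t + (α * q + β * t) / 2) (β * r) := by
  funext s
  rw [sphereCovD, (hasDerivAt_torusFrameField v α β p q r t s).deriv,
    inner_torusFrameField α β horth hnorm]
  simp only [torusFrameField]
  module

theorem torusFrameField_biharmonic (horth : ∀ i j : Fin 4, i ≠ j → ⟪v i, v j⟫ = 0)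
    (hnorm : ∀ i : Fin 4, ‖v i‖ ^ 2 = 1 / 2) (hαβ : α ^ 2 + β ^ 2 = 2) (s : ℝ) :
    let γ := torusFrameField v α β 1 0 1 0
    sphereCovD γ (sphereCovD γ (sphereCovD γ (deriv γ))) s + sphereCovD γ (deriv γ) s = 0 := by
  intro γ
  have hγ' : deriv γ = torusFrameField v α β 0 α 0 β := by
    funext u
    simpa using (hasDerivAt_torusFrameField v α β 1 0 1 0 u).deriv
  simp only [γ, hγ', sphereCovD_torusFrameField horth hnorm, torusFrameField_add]
  convert torusFrameField_zero v α β s using 2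
  · linear_combination (α ^ 2 - β ^ 2) / 4 * hαβ
  · ring
  · linear_combination (β ^ 2 - α ^ 2) / 4 * hαβ
  · ring

end SphereCovD

theorem clifford_geodesic_biharmonic_general (n : ℕ)
    (v : Fin 4 → EuclideanSpace ℝ (Fin (n + 1)))
    (horth : ∀ i j : Fin 4, i ≠ j → ⟪v i, v j⟫ = 0)
    (hnorm : ∀ i : Fin 4, ‖v i‖ ^ 2 = 1 / 2)
    (a b : ℝ) (hab : a ^ 2 + b ^ 2 = 1) :
    let γ : ℝ → EuclideanSpace ℝ (Fin (n + 1)) := fun s =>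
      Real.cos (Real.sqrt 2 * a * s) • v 0 + Real.sin (Real.sqrt 2 * a * s) • v 1 +
        Real.cos (Real.sqrt 2 * b * s) • v 2 + Real.sin (Real.sqrt 2 * b * s) • v 3
    ∀ s : ℝ,
      sphereCovD γ (sphereCovD γ (sphereCovD γ (deriv γ))) s
        + sphereCovD γ (deriv γ) s = 0 := by
  intro γ s
  have hγ : γ = torusFrameField v (√2 * a) (√2 * b) 1 0 1 0 := by
    funext u
    simp only [γ, torusFrameField, planeCircle, one_smul, zero_smul, add_zero, add_assoc]
  have hspeed : (√2 * a) ^ 2 + (√2 * b) ^ 2 = 2 := by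
    rw [mul_pow, mul_pow, sq_sqrt zero_le_two]
    linear_combination 2 * hab
  rw [hγ]
  exact torusFrameField_biharmonic horth hnorm hspeed s

/-- For pairwise orthogonal vectors `v₁, v₂, v₃, v₄ ∈ ℝ^{n+1}` with
`‖vᵢ‖² = 1/2` and `a² + b² = 1`, the curve
`γ(s) = cos(√2 a s) v₁ + sin(√2 a s) v₂ + cos(√2 b s) v₃ + sin(√2 b s) v₄`
satisfies `D(D(D γ'))(s) + (D γ')(s) = 0` for all `s`; that is, `γ` is a biharmonic curve
in the unit sphere `Sⁿ`. -/
theorem clifford_geodesic_biharmonic (n : ℕ) (hn : 3 ≤ n)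
    (v : Fin 4 → EuclideanSpace ℝ (Fin (n + 1)))
    (horth : ∀ i j : Fin 4, i ≠ j → ⟪v i, v j⟫ = 0)
    (hnorm : ∀ i : Fin 4, ‖v i‖ ^ 2 = 1 / 2)
    (a b : ℝ) (hab : a ^ 2 + b ^ 2 = 1) :
    let γ : ℝ → EuclideanSpace ℝ (Fin (n + 1)) := fun s =>
      Real.cos (Real.sqrt 2 * a * s) • v 0 + Real.sin (Real.sqrt 2 * a * s) • v 1 +
        Real.cos (Real.sqrt 2 * b * s) • v 2 + Real.sin (Real.sqrt 2 * b * s) • v 3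
    ∀ s : ℝ,
      sphereCovD γ (sphereCovD γ (sphereCovD γ (deriv γ))) s
        + sphereCovD γ (deriv γ) s = 0 :=
  clifford_geodesic_biharmonic_general n v horth hnorm a b hab
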